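/- Let X ⊆ ℕ and let f : ℕ × ℕ → Option (Finset ℕ) be computable with Xᶜ ≤ₑ^f X, and define the partial function g by: g(x) is the least n such that ∃ F : Finset ℕ, f (x, n) = some F ∧ ↑F ⊆ X (undefined if no such n exists). Let h : ℕ → ℕ be any total function such that g(x) ≤ h(x) whenever g(x) is defined, and let H = { Nat.pair x (h x) | x : ℕ } ⊆ ℕ. Then X ≤ₑ H ⊕ Xᶜ, where the join is A ⊕ B = { 2 * n | n ∈ A } ∪ { 2 * n + 1 | n ∈ B }. -/

import Mathlib

/-- A set `X ⊆ ℕ` satisfies the Horn implications encoded by `S`: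
a list `n₀ :: t ∈ S` means `(∀ m ∈ t, m ∈ X) → n₀ ∈ X`. -/
def SatisfiesHorn (S : Set (List ℕ)) (X : Set ℕ) : Prop :=
  ∀ n₀ : ℕ, ∀ t : List ℕ, (n₀ :: t) ∈ S → (∀ m ∈ t, m ∈ X) → n₀ ∈ X

/-- The quasivariety defined by `S`. -/
def QV (S : Set (List ℕ)) : Set (Set ℕ) := {X | SatisfiesHorn S X}

/-- The closure of `Y`: the smallest element of `QV S` containing `Y`. -/
def QVclosure (S : Set (List ℕ)) (Y : Set ℕ) : Set ℕ :=
  ⋂₀ {X | X ∈ QV S ∧ Y ⊆ X}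

/-- `A` is enumeration reducible to `B` via `f`. -/
def EnumRedVia (A B : Set ℕ) (f : ℕ × ℕ → Option (Finset ℕ)) : Prop :=
  Computable f ∧
    ∀ x : ℕ, x ∈ A ↔ ∃ n : ℕ, ∃ F : Finset ℕ, f (x, n) = some F ∧ ↑F ⊆ B

/-- `A` is enumeration reducible to `B`. -/
def EnumRed (A B : Set ℕ) : Prop := ∃ f : ℕ × ℕ → Option (Finset ℕ), EnumRedVia A B f

/-- The recursive join `A ⊕ B`. -/
def SetJoin (A B : Set ℕ) : Set ℕ :=
  {k : ℕ | ∃ n ∈ A, k = 2 * n} ∪ {k : ℕ | ∃ n ∈ B, k = 2 * n + 1}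

/-! A finite set `G ⊆ H ⊕ Xᶜ` can certify `x ∈ X` by containing the code `2 * Nat.pair x k` of a
point of the graph of `h`, which pins `k = h x`, together with the code `2 * m + 1` of an element
`m ∈ Xᶜ` of every axiom `f (x, n)` with `n ≤ k`. If `x ∈ X`, then `x ∉ Xᶜ`, so no axiom for `x`
lies inside `X` and such a `G` exists. If `x ∉ X`, the least `n` with `f (x, n) ⊆ X` is at most
`h x = k`, and that axiom cannot meet `Xᶜ`, so no certificate exists. Checking a certificate only
involves `f (x, 0), …, f (x, k)`, hence is computable. -/

open Denumerable Encodable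

/- `Primcodable (Finset ℕ)` is the `Denumerable.finset` instance, not `Finset.encodable`: a finset
is coded by the successive gaps of its sorted list, and decoded with `raise'`. -/
theorem Denumerable.ofNat_finset_nat (n : ℕ) :
    ofNat (Finset ℕ) n = raise'Finset (ofNat (List ℕ) n) 0 := by
  show Finset.map _ _ = _
  ext m
  simp [Denumerable.eqv]

theorem Denumerable.sort_ofNat_finset_nat (n : ℕ) :
    (ofNat (Finset ℕ) n).sort = raise' (ofNat (List ℕ) n) 0 := by
  rw [ofNat_finset_nat]
  exact List.mergeSort_eq_self _ (raise'_sorted (ofNat (List ℕ) n) 0).sortedLE.pairwise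

theorem Denumerable.raise'_eq_map_add (l : List ℕ) (n : ℕ) :
    raise' l n = (raise' l 0).map (· + n) := by
  induction l generalizing n with
  | nil => rfl
  | cons m l ih => simp [raise', ih (m + n + 1), ih (m + 1), Function.comp_def]; grind

theorem Primrec.raise'_zero : Primrec fun l : List ℕ => raise' l 0 := by
  have step : Primrec fun p : ℕ × List ℕ => p.1 :: p.2.map (· + (p.1 + 1)) :=
    list_cons.comp fst (list_map snd (nat_add.comp snd (succ.comp (fst.comp fst))).to₂)
  have hfold : Primrec fun l : List ℕ => l.foldr (fun m r => m :: r.map (· + (m + 1))) [] :=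
    list_foldr .id (const []) (step.comp snd).to₂
  refine hfold.of_eq fun l => ?_
  induction l with
  | nil => rfl
  | cons m l ih => simp [ih, raise', raise'_eq_map_add l (m + 1)]

theorem Primrec.finset_sort_nat : Primrec fun s : Finset ℕ => s.sort :=
  (raise'_zero.comp ((Primrec.ofNat _).comp Primrec.encode)).of_eq
    fun s => by rw [← sort_ofNat_finset_nat]; exact congrArg Finset.sort (ofNat_encode s)

theorem PrimrecRel.exists_mem_finset_nat {β : Type*} [Primcodable β] {R : ℕ → β → Prop}
    (hR : PrimrecRel R) : PrimrecRel fun (s : Finset ℕ) b => ∃ a ∈ s, R a b :=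
  (hR.exists_mem_list.comp (Primrec.finset_sort_nat.comp .fst) .snd).of_eq fun _ => by simp

theorem PrimrecRel.forall_mem_option {α β : Type*} [Primcodable α] [Primcodable β]
    {R : α → β → Prop} (hR : PrimrecRel R) : PrimrecRel fun (o : Option α) b => ∀ a ∈ o, R a b :=
  (hR.forall_mem_list.comp (Primrec.optionToList.comp .fst) .snd).of_eq fun _ => by simp

theorem Primrec.finset_mem_nat : PrimrecRel fun (m : ℕ) (s : Finset ℕ) => m ∈ s :=
  (PrimrecRel.exists_mem_finset_nat Primrec.eq).swap.of_eq fun _ => by simp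

theorem ComputablePred.forall_lt {α : Type*} [Primcodable α] {p : α → ℕ → Prop}
    (hp : ComputablePred fun q : α × ℕ => p q.1 q.2) :
    ComputablePred fun q : α × ℕ => ∀ n < q.2, p q.1 n := by
  classical
  refine Computable.computablePred <|
    (Computable.nat_rec (h := fun q s => s.2 && decide (p q.1 s.1)) .snd (.const true) ?_).of_eq
      fun q => ?_
  · exact (Primrec.and.to_comp.comp (Computable.snd.comp .snd)
      (hp.decide.comp (.pair (Computable.fst.comp .fst) (Computable.fst.comp .snd)))).to₂
  · induction q.2 with
    | zero => simp
    | succ k ih => simp only [ih, Nat.forall_lt_succ_right, Bool.decide_and]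

theorem Nat.exists_le_of_least_le {P : ℕ → Prop} {b : ℕ}
    (hb : ∀ m, P m → (∀ n < m, ¬ P n) → m ≤ b) (hP : ∃ n, P n) : ∃ n ≤ b, P n := by
  classical
  exact ⟨Nat.find hP, hb _ (Nat.find_spec hP) fun _ => Nat.find_min hP, Nat.find_spec hP⟩

theorem enumRed_of_computablePred {α : Type*} [Primcodable α] {A B : Set ℕ}
    (P : ℕ → α → Prop) (g : α → Finset ℕ)
    (hP : ComputablePred fun q : ℕ × α => P q.1 q.2) (hg : Computable g)
    (hA : ∀ x, x ∈ A ↔ ∃ i, P x i ∧ ↑(g i) ⊆ B) : EnumRed A B := by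
  classical
  refine ⟨fun p => (decode (α := α) p.2).bind fun i => if P p.1 i then some (g i) else none,
    ?_, fun x => ?_⟩
  · refine Computable.option_bind (Computable.decode.comp .snd) ?_
    exact (Computable.cond (hP.decide.comp (.pair (Computable.fst.comp .fst) .snd))
      (Computable.option_some.comp (hg.comp .snd)) (.const none)).of_eq fun _ => by simp
  · rw [hA]
    constructor
    · rintro ⟨i, hPi, hgi⟩
      exact ⟨encode i, g i, by simp [hPi], hgi⟩
    · rintro ⟨n, F, hF, hFB⟩
      obtain ⟨i, -, hi⟩ := Option.bind_eq_some_iff.mp hF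
      by_cases hPi : P x i
      · simp only [hPi, if_true, Option.some.injEq] at hi
        exact ⟨i, hPi, hi ▸ hFB⟩
      · simp [hPi] at hi

theorem two_mul_mem_setJoin_iff {A B : Set ℕ} {n : ℕ} : 2 * n ∈ SetJoin A B ↔ n ∈ A := by
  simp only [SetJoin, Set.mem_union, Set.mem_ofPred_eq]
  constructor
  · rintro (⟨m, hm, hnm⟩ | ⟨m, -, hnm⟩)
    · rwa [show n = m by omega]
    · omega
  · exact fun hn => .inl ⟨n, hn, rfl⟩

theorem two_mul_add_one_mem_setJoin_iff {A B : Set ℕ} {n : ℕ} :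
    2 * n + 1 ∈ SetJoin A B ↔ n ∈ B := by
  simp only [SetJoin, Set.mem_union, Set.mem_ofPred_eq]
  constructor
  · rintro (⟨m, -, hnm⟩ | ⟨m, hm, hnm⟩)
    · omega
    · rwa [show n = m by omega]
  · exact fun hn => .inr ⟨n, hn, rfl⟩

theorem pair_mem_graph_iff {h : ℕ → ℕ} {x k : ℕ} :
    Nat.pair x k ∈ {n : ℕ | ∃ y, n = Nat.pair y (h y)} ↔ k = h x := by
  constructor
  · rintro ⟨y, hy⟩
    obtain ⟨rfl, rfl⟩ := Nat.pair_eq_pair.mp hy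
    rfl
  · rintro rfl
    exact ⟨x, rfl⟩

def IsCertificate (f : ℕ × ℕ → Option (Finset ℕ)) (x : ℕ) (c : ℕ × Finset ℕ) : Prop :=
  2 * Nat.pair x c.1 ∈ c.2 ∧ ∀ n ≤ c.1, ∀ F ∈ f (x, n), ∃ m ∈ F, 2 * m + 1 ∈ c.2

theorem computablePred_isCertificate {f : ℕ × ℕ → Option (Finset ℕ)} (hf : Computable f) :
    ComputablePred fun q : ℕ × ℕ × Finset ℕ => IsCertificate f q.1 q.2 := by
  classical
  have hgraph : Computable fun q : ℕ × ℕ × Finset ℕ => decide (2 * Nat.pair q.1 q.2.1 ∈ q.2.2) :=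
    (Primrec.finset_mem_nat.decide.comp (Primrec.nat_double.comp
      (Primrec₂.natPair.comp .fst (Primrec.fst.comp .snd))) (Primrec.snd.comp .snd)).to_comp
  have hrefute : PrimrecRel fun (o : Option (Finset ℕ)) (G : Finset ℕ) =>
      ∀ F ∈ o, ∃ m ∈ F, 2 * m + 1 ∈ G :=
    (PrimrecRel.exists_mem_finset_nat
      (Primrec.finset_mem_nat.comp₂ (Primrec.nat_double_succ.comp₂ .left) .right)).forall_mem_option
  have hstep : Computable fun q : (ℕ × Finset ℕ) × ℕ =>
      decide (∀ F ∈ f (q.1.1, q.2), ∃ m ∈ F, 2 * m + 1 ∈ q.1.2) :=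
    hrefute.decide.to_comp.comp (hf.comp (.pair (Computable.fst.comp .fst) .snd))
      (Computable.snd.comp .fst)
  have hforall : ComputablePred fun q : (ℕ × Finset ℕ) × ℕ =>
      ∀ n < q.2, ∀ F ∈ f (q.1.1, n), ∃ m ∈ F, 2 * m + 1 ∈ q.1.2 :=
    ComputablePred.forall_lt (p := fun (q : ℕ × Finset ℕ) n => ∀ F ∈ f (q.1, n),
      ∃ m ∈ F, 2 * m + 1 ∈ q.2) hstep.computablePred
  have hloop : Computable fun q : ℕ × ℕ × Finset ℕ =>
      decide (∀ n < q.2.1 + 1, ∀ F ∈ f (q.1, n), ∃ m ∈ F, 2 * m + 1 ∈ q.2.2) :=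
    hforall.decide.comp (g := fun q : ℕ × ℕ × Finset ℕ => ((q.1, q.2.2), q.2.1 + 1))
      (.pair (.pair .fst (Computable.snd.comp .snd))
        (Computable.succ.comp (Computable.fst.comp .snd)))
  refine Computable.computablePred ((Primrec.and.to_comp.comp hgraph hloop).of_eq fun q => ?_)
  simp [IsCertificate]

theorem exists_isCertificate {f : ℕ × ℕ → Option (Finset ℕ)} {X A : Set ℕ} {x k : ℕ}
    (hfx : ∀ n, ∀ F ∈ f (x, n), ¬ ↑F ⊆ X) (hxk : Nat.pair x k ∈ A) :
    ∃ G : Finset ℕ, IsCertificate f x (k, G) ∧ ↑G ⊆ SetJoin A Xᶜ := by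
  classical
  let T := (Finset.range (k + 1)).biUnion fun n => ((f (x, n)).getD ∅).filter (· ∉ X)
  refine ⟨insert (2 * Nat.pair x k) (T.image (2 * · + 1)), ⟨by simp, fun n hn F hF => ?_⟩, ?_⟩
  · obtain ⟨m, hmF, hmX⟩ := Set.not_subset.mp (hfx n F hF)
    refine ⟨m, hmF, Finset.mem_insert_of_mem (Finset.mem_image_of_mem _ ?_)⟩
    simp only [T, Finset.mem_biUnion, Finset.mem_range, Finset.mem_filter]
    exact ⟨n, Nat.lt_succ_of_le hn, by simpa [Option.mem_def.mp hF] using hmF, hmX⟩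
  · intro y hy
    simp only [Finset.coe_insert, Finset.coe_image, Set.mem_insert_iff, Set.mem_image] at hy
    rcases hy with rfl | ⟨m, hmT, rfl⟩
    · exact two_mul_mem_setJoin_iff.mpr hxk
    · simp only [T, Finset.coe_biUnion, Set.mem_iUnion, Finset.coe_filter] at hmT
      obtain ⟨n, -, -, hmX⟩ := hmT
      exact two_mul_add_one_mem_setJoin_iff.mpr hmX

theorem mem_of_isCertificate {f : ℕ × ℕ → Option (Finset ℕ)} {X A : Set ℕ} {x k : ℕ}
    {G : Finset ℕ} (hx : x ∉ X → ∃ n ≤ k, ∃ F : Finset ℕ, f (x, n) = some F ∧ ↑F ⊆ X)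
    (hc : IsCertificate f x (k, G)) (hG : ↑G ⊆ SetJoin A Xᶜ) : x ∈ X := by
  by_contra hxX
  obtain ⟨n, hnk, F, hF, hFX⟩ := hx hxX
  obtain ⟨m, hmF, hmG⟩ := hc.2 n hnk F hF
  exact two_mul_add_one_mem_setJoin_iff.mp (hG hmG) (hFX hmF)

/-- If `h` dominates the modulus function `g` of the reduction `Xᶜ ≤ₑ^f X`
(i.e. `g x ≤ h x` whenever `g x` is defined), then `X` is enumeration
reducible to the join of the graph of `h` and `Xᶜ`. -/
theorem enumRed_of_modulus_bound (X : Set ℕ) (f : ℕ × ℕ → Option (Finset ℕ))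
    (hf : EnumRedVia Xᶜ X f) (h : ℕ → ℕ)
    (hh : ∀ x m : ℕ,
      (∃ F : Finset ℕ, f (x, m) = some F ∧ ↑F ⊆ X) →
      (∀ n < m, ¬ ∃ F : Finset ℕ, f (x, n) = some F ∧ ↑F ⊆ X) →
      m ≤ h x) :
    EnumRed X (SetJoin {k : ℕ | ∃ x : ℕ, k = Nat.pair x (h x)} Xᶜ) := by
  obtain ⟨hfc, hfX⟩ := hf
  refine enumRed_of_computablePred (IsCertificate f) Prod.snd (computablePred_isCertificate hfc)
    Computable.snd fun x => ⟨fun hx => ?_, ?_⟩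
  · have hfx : ∀ n, ∀ F ∈ f (x, n), ¬ ↑F ⊆ X := fun n F hF hFX => (hfX x).mpr ⟨n, F, hF, hFX⟩ hx
    obtain ⟨G, hG⟩ := exists_isCertificate hfx (pair_mem_graph_iff.mpr rfl)
    exact ⟨(h x, G), hG⟩
  · rintro ⟨⟨k, G⟩, hc, hG⟩
    have hk : k = h x := pair_mem_graph_iff.mp (two_mul_mem_setJoin_iff.mp (hG hc.1))
    refine mem_of_isCertificate (fun hx => ?_) hc hG
    exact hk ▸ Nat.exists_le_of_least_le (hh x) ((hfX x).mp hx)
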